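/- arXiv:1708.01902 — 5 statements merged into one kernel-verified Lean document; each statement's English description precedes it below -/
import Mathlib

section
/- Let $z_1, \ldots, z_{n+1}$ be exchangeable random variables taking values in a measurable space $\mathbf{Z}$ (i.e., their joint distribution is invariant under all permutations of indices), and let $\alpha_i := A(z_1,\ldots,z_{i-1},z_{i+1},\ldots,z_{n+1},z_i)$ for $i = 1,\ldots,n+1$, where $A : \mathbf{Z}^{n+1} \to \mathbb{R}$ is measurable and invariant under permutations of its first $n$ arguments. Let $\tau$ be uniform on $[0,1]$ independent of $(z_1,\ldots,z_{n+1})$. Then the random variable $U := \frac{1}{n+1}\left(|\{i : \alpha_i < \alpha_{n+1}\}| + \tau|\{i : \alpha_i = \alpha_{n+1}\}|\right)$ is uniformly distributed on $[0,1]$: for all $\alpha \in [0,1]$, $P(U \le \alpha) = \alpha$. -/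
/-!
Fix the scores and write `L` for the number of scores below a given one and `E` for the size of
its tie class. The event `L + τ E ≤ c` has probability equal to the length of `[L, L + E] ∩ [0, c]`
divided by `E`; summing over all `n + 1` indices, every tie class contributes exactly that length,
and these intervals tile `[0, n + 1]`, so the probabilities add up to `c`. Exchangeability of the
observations makes the scores exchangeable, so all `n + 1` events `smoothedRank k τ ≤ c` are
equally likely, and each has probability `c / (n + 1)`.
-/

open MeasureTheory ProbabilityTheory Finset
open scoped ENNReal

lemma volume_restrict_Icc_setOf_add_mul_le (L E c : ℝ) (hE : 0 < E) :
    volume.restrict (Set.Icc (0 : ℝ) 1) {t | L + t * E ≤ c} =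
      ENNReal.ofReal ((min c (L + E) - min c L) / E) := by
  have hset : {t | L + t * E ≤ c} = Set.Iic ((c - L) / E) := by
    ext t
    simp only [Set.mem_ofPred_eq, Set.mem_Iic, le_div_iff₀ hE]
    constructor <;> intro h <;> linarith
  have hinter (x : ℝ) : Set.Iic x ∩ Set.Icc 0 1 = Set.Icc 0 (min x 1) := by
    ext t
    simp only [Set.mem_inter_iff, Set.mem_Iic, Set.mem_Icc, le_min_iff]
    tauto
  rw [hset, Measure.restrict_apply measurableSet_Iic, hinter, Real.volume_Icc, sub_zero]
  rcases le_total c L with h | h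
  · rw [min_eq_left h, min_eq_left (by linarith : c ≤ L + E), sub_self, zero_div,
      ENNReal.ofReal_zero, ENNReal.ofReal_eq_zero]
    exact (min_le_left _ _).trans (div_nonpos_of_nonpos_of_nonneg (by linarith) hE.le)
  · rw [min_eq_right h]
    congr 1
    rcases le_total c (L + E) with h' | h'
    · rw [min_eq_left h', min_eq_left ((div_le_one hE).2 (by linarith))]
    · rw [min_eq_right h', min_eq_right ((one_le_div hE).2 (by linarith)), add_sub_cancel_left,
        div_self hE.ne']

section SmoothedRank

variable {ι α : Type*} [Fintype ι] [LinearOrder α]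

/-- `Fintype.card ι` times the smoothed conformal p-value of the `k`-th score `β k`, with
tie-breaker `t`. -/
def smoothedRank (β : ι → α) (k : ι) (t : ℝ) : ℝ :=
  #{j | β j < β k} + t * #{j | β j = β k}

lemma smoothedRank_comp_perm (β : ι → α) (π : Equiv.Perm ι) (k : ι) (t : ℝ) :
    smoothedRank (β ∘ π) k t = smoothedRank β (π k) t := by
  have card_comp (p : α → Prop) [DecidablePred p] : #{j | p (β (π j))} = #{j | p (β j)} := by
    simp only [card_filter]
    exact Equiv.sum_comp π fun j => if p (β j) then 1 else 0
  simp only [smoothedRank, Function.comp_apply, card_comp (· < β (π k)), card_comp (· = β (π k))]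

lemma card_filter_lt_add_card_filter_eq (β : ι → α) (v : α) :
    #{j | β j < v} + #{j | β j = v} = #{j | β j ≤ v} := by
  classical
  rw [← card_union_of_disjoint (disjoint_filter.2 fun _ _ h => h.ne), ← filter_or]
  simp only [le_iff_lt_or_eq]

/-- Counting only the `j` with `β j ∈ T` lets a new maximum of `T` leave the older terms
unchanged, which drives the induction. -/
lemma sum_min_card_le_sub_min_card_lt (β : ι → α) {c : ℝ} (hc : 0 ≤ c) (T : Finset α) :
    ∑ v ∈ T, (min c #{j | β j ∈ T ∧ β j ≤ v} - min c #{j | β j ∈ T ∧ β j < v} : ℝ) =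
      min c #{j | β j ∈ T} := by
  induction T using Finset.induction_on_max with
  | empty => simp [hc]
  | insert a s hlt ih =>
    have ha : a ∉ s := fun h => (hlt a h).false
    have below (v : α) (hv : v ∈ s) (r : α → α → Prop) [DecidableRel r]
        (hr : ∀ x, r x v → x < a) :
        #{j | β j ∈ insert a s ∧ r (β j) v} = #{j | β j ∈ s ∧ r (β j) v} := by
      congr 1; exact filter_congr fun j _ => by grind
    have le_top : #{j | β j ∈ insert a s ∧ β j ≤ a} = #{j | β j ∈ insert a s} := by
      congr 1; exact filter_congr fun j _ => by grind
    have lt_top : #{j | β j ∈ insert a s ∧ β j < a} = #{j | β j ∈ s} := by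
      congr 1; exact filter_congr fun j _ => by grind
    rw [sum_insert ha, le_top, lt_top, sum_congr rfl fun v hv => by
      rw [below v hv (· ≤ ·) fun x hx => hx.trans_lt (hlt v hv),
        below v hv (· < ·) fun x hx => hx.trans (hlt v hv)], ih]
    ring

lemma sum_min_card_le_sub_min_card_lt_div_card_eq (β : ι → α) {c : ℝ} (hc0 : 0 ≤ c)
    (hc : c ≤ Fintype.card ι) :
    ∑ k, (min c #{j | β j ≤ β k} - min c #{j | β j < β k} : ℝ) / #{j | β j = β k} = c := by
  classical
  rw [sum_comp (fun v => (min c #{j | β j ≤ v} - min c #{j | β j < v} : ℝ) / #{j | β j = v}) β]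
  have fiber (v : α) (hv : v ∈ univ.image β) (x : ℝ) :
      #{j | β j = v} • (x / #{j | β j = v}) = x := by
    obtain ⟨k, -, rfl⟩ := mem_image.1 hv
    have : (#{j | β j = β k} : ℝ) ≠ 0 := by
      exact_mod_cast (card_pos.2 ⟨k, by simp⟩).ne'
    rw [nsmul_eq_mul, mul_div_cancel₀ _ this]
  rw [sum_congr rfl fun v hv => fiber v hv _]
  simpa [min_eq_left hc] using sum_min_card_le_sub_min_card_lt β hc0 (univ.image β)

theorem sum_volume_restrict_Icc_smoothedRank_le (β : ι → α) {c : ℝ} (hc0 : 0 ≤ c)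
    (hc : c ≤ Fintype.card ι) :
    ∑ k, volume.restrict (Set.Icc (0 : ℝ) 1) {t | smoothedRank β k t ≤ c} = ENNReal.ofReal c := by
  have hE (k : ι) : (0 : ℝ) < #{j | β j = β k} := by exact_mod_cast card_pos.2 ⟨k, by simp⟩
  have hLE (k : ι) : (#{j | β j < β k} : ℝ) + #{j | β j = β k} = #{j | β j ≤ β k} := by
    exact_mod_cast card_filter_lt_add_card_filter_eq β (β k)
  calc ∑ k, volume.restrict (Set.Icc (0 : ℝ) 1) {t | smoothedRank β k t ≤ c}
      = ∑ k, ENNReal.ofReal ((min c (#{j | β j < β k} + #{j | β j = β k}) -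
          min c #{j | β j < β k}) / #{j | β j = β k}) :=
        sum_congr rfl fun k _ => volume_restrict_Icc_setOf_add_mul_le _ _ c (hE k)
    _ = ENNReal.ofReal (∑ k, (min c #{j | β j ≤ β k} - min c #{j | β j < β k} : ℝ) /
          #{j | β j = β k}) := by
        rw [← ENNReal.ofReal_sum_of_nonneg fun k _ => div_nonneg (sub_nonneg.2
          (min_le_min_left c (le_add_of_nonneg_right (hE k).le))) (hE k).le]
        simp_rw [hLE]
    _ = ENNReal.ofReal c := by rw [sum_min_card_le_sub_min_card_lt_div_card_eq β hc0 hc]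

end SmoothedRank

section Exchangeable

variable {ι : Type*} [Fintype ι]

lemma measurable_smoothedRank (k : ι) :
    Measurable fun p : (ι → ℝ) × ℝ => smoothedRank p.1 k p.2 := by
  have hcard (r : ℝ → ℝ → Prop) [DecidableRel r]
      (hr : ∀ j, MeasurableSet {x : ι → ℝ | r (x j) (x k)}) :
      Measurable fun x : ι → ℝ => (#{j | r (x j) (x k)} : ℝ) := by
    simp only [card_filter, Nat.cast_sum, Nat.cast_ite, Nat.cast_one, Nat.cast_zero]
    exact Finset.measurable_sum _ fun j _ => Measurable.ite (hr j) measurable_const measurable_const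
  have hlt := hcard (· < ·) fun j =>
    measurableSet_lt (measurable_pi_apply j) (measurable_pi_apply k)
  have heq := hcard (· = ·) fun j =>
    measurableSet_eq_fun (measurable_pi_apply j) (measurable_pi_apply k)
  exact (hlt.comp measurable_fst).add (measurable_snd.mul (heq.comp measurable_fst))

lemma measurableSet_smoothedRank_le (k : ι) (c : ℝ) :
    MeasurableSet {p : (ι → ℝ) × ℝ | smoothedRank p.1 k p.2 ≤ c} :=
  measurableSet_le (measurable_smoothedRank k) measurable_const

theorem prod_smoothedRank_le_mul_card {μ : Measure (ι → ℝ)} [IsProbabilityMeasure μ]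
    (hμ : ∀ π : Equiv.Perm ι, μ.map (fun x => x ∘ π) = μ) (k : ι) {a : ℝ} (ha0 : 0 ≤ a)
    (ha1 : a ≤ 1) :
    (μ.prod (volume.restrict (Set.Icc (0 : ℝ) 1)))
      {p | smoothedRank p.1 k p.2 ≤ a * Fintype.card ι} = ENNReal.ofReal a := by
  set ν := volume.restrict (Set.Icc (0 : ℝ) 1)
  set c := a * Fintype.card ι
  have hc : c ≤ Fintype.card ι := mul_le_of_le_one_left (Nat.cast_nonneg _) ha1
  have hperm (π : Equiv.Perm ι) (j : ι) :
      (μ.prod ν) {p | smoothedRank p.1 (π j) p.2 ≤ c} =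
        (μ.prod ν) {p | smoothedRank p.1 j p.2 ≤ c} := by
    have hmp : MeasurePreserving (Prod.map (fun x : ι → ℝ => x ∘ π) id) (μ.prod ν) (μ.prod ν) :=
      (MeasurePreserving.mk (by fun_prop) (hμ π)).prod (MeasurePreserving.id ν)
    rw [← hmp.measure_preimage (measurableSet_smoothedRank_le j c).nullMeasurableSet]
    simp only [Set.preimage, Set.mem_ofPred_eq, Prod.map_fst, Prod.map_snd, id,
      smoothedRank_comp_perm]
  have hsum : (Fintype.card ι : ℝ≥0∞) * (μ.prod ν) {p | smoothedRank p.1 k p.2 ≤ c} =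
      ENNReal.ofReal c := calc
    _ = ∑ j, (μ.prod ν) {p | smoothedRank p.1 j p.2 ≤ c} := by
        classical
        rw [sum_congr rfl fun j _ => by simpa using hperm (Equiv.swap k j) k, sum_const,
          card_univ, nsmul_eq_mul]
    _ = ∑ j, ∫⁻ x, ν {t | smoothedRank x j t ≤ c} ∂μ :=
        sum_congr rfl fun j _ => Measure.prod_apply (measurableSet_smoothedRank_le j c)
    _ = ∫⁻ x, ∑ j, ν {t | smoothedRank x j t ≤ c} ∂μ := (lintegral_finsetSum _ fun j _ =>
        measurable_measure_prodMk_left (measurableSet_smoothedRank_le j c)).symm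
    _ = ENNReal.ofReal c := by
        rw [lintegral_congr fun x => sum_volume_restrict_Icc_smoothedRank_le x
          (mul_nonneg ha0 (Nat.cast_nonneg _)) hc, lintegral_const, measure_univ, mul_one]
  rw [ENNReal.ofReal_mul ha0, ENNReal.ofReal_natCast, mul_comm] at hsum
  exact (ENNReal.mul_left_inj (Nat.cast_ne_zero.2 (Fintype.card_pos_iff.2 ⟨k⟩).ne')
    (ENNReal.natCast_ne_top _)).1 hsum

end Exchangeable

section ConformityScores

variable {n : ℕ} {Z : Type*}

def conformityScores (A : (Fin n → Z) → Z → ℝ) (v : Fin (n + 1) → Z) (i : Fin (n + 1)) : ℝ :=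
  A (fun j => v (i.succAbove j)) (v i)

lemma exists_perm_succAbove_eq (π : Equiv.Perm (Fin (n + 1))) (i : Fin (n + 1)) :
    ∃ σ : Equiv.Perm (Fin n), ∀ j, π (i.succAbove j) = (π i).succAbove (σ j) := by
  let e : { x // x ≠ i } ≃ { x // x ≠ π i } := π.subtypeEquiv fun _ => π.injective.ne_iff.symm
  let σ := (finSuccAboveEquiv i).trans (e.trans (finSuccAboveEquiv (π i)).symm)
  refine ⟨σ, fun j => ?_⟩
  change _ = (finSuccAboveEquiv (π i) (σ j) : Fin (n + 1))
  simp [σ, e, finSuccAboveEquiv_apply]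

lemma conformityScores_comp_perm {A : (Fin n → Z) → Z → ℝ}
    (hA : ∀ (s : Fin n → Z) (w : Z) (σ : Equiv.Perm (Fin n)), A (s ∘ σ) w = A s w)
    (v : Fin (n + 1) → Z) (π : Equiv.Perm (Fin (n + 1))) :
    conformityScores A (v ∘ π) = conformityScores A v ∘ π := by
  funext i
  obtain ⟨σ, hσ⟩ := exists_perm_succAbove_eq π i
  simp only [conformityScores, Function.comp_apply, hσ]
  exact hA (fun j => v ((π i).succAbove j)) _ σ

lemma measurable_conformityScores [MeasurableSpace Z] {A : (Fin n → Z) → Z → ℝ}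
    (hA : Measurable fun p : (Fin n → Z) × Z => A p.1 p.2) : Measurable (conformityScores A) :=
  measurable_pi_lambda _ fun i =>
    hA.comp (f := fun v : Fin (n + 1) → Z => (fun j => v (i.succAbove j), v i)) (by fun_prop)

lemma map_conformityScores_comp_perm [MeasurableSpace Z] {A : (Fin n → Z) → Z → ℝ}
    (hA : Measurable fun p : (Fin n → Z) × Z => A p.1 p.2)
    (hAinv : ∀ (s : Fin n → Z) (w : Z) (σ : Equiv.Perm (Fin n)), A (s ∘ σ) w = A s w)
    {μ : Measure (Fin (n + 1) → Z)}
    (hμ : ∀ π : Equiv.Perm (Fin (n + 1)), μ.map (fun v => v ∘ π) = μ)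
    (π : Equiv.Perm (Fin (n + 1))) :
    (μ.map (conformityScores A)).map (fun x => x ∘ π) = μ.map (conformityScores A) := by
  have hcomm : (fun x => x ∘ π) ∘ conformityScores A = conformityScores A ∘ fun v => v ∘ π :=
    funext fun v => (conformityScores_comp_perm hAinv v π).symm
  rw [Measure.map_map (by fun_prop) (measurable_conformityScores hA), hcomm,
    ← Measure.map_map (measurable_conformityScores hA) (by fun_prop), hμ π]

end ConformityScores

/-- Validity (R2) of smoothed conformal transducers: for exchangeable
observations `z 0, …, z n`, a conformity measure `A` invariant under
permutations of its first `n` arguments, and an independent uniform `τ`,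
the smoothed conformal p-value `U` is uniformly distributed on `[0,1]`. -/
theorem stmt_6 {Ω Z : Type*} [MeasurableSpace Ω] [MeasurableSpace Z]
    (P : Measure Ω) [IsProbabilityMeasure P] (n : ℕ)
    (z : Fin (n + 1) → Ω → Z) (hz : ∀ i, Measurable (z i))
    (hexch : ∀ π : Equiv.Perm (Fin (n + 1)),
      Measure.map (fun ω => fun i => z (π i) ω) P = Measure.map (fun ω => fun i => z i ω) P)
    (A : (Fin n → Z) → Z → ℝ) (hA : Measurable (fun p : (Fin n → Z) × Z => A p.1 p.2))
    (hAinv : ∀ (s : Fin n → Z) (w : Z) (π : Equiv.Perm (Fin n)), A (s ∘ π) w = A s w)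
    (τ : Ω → ℝ) (hτ : Measurable τ)
    (hτunif : Measure.map τ P = volume.restrict (Set.Icc (0 : ℝ) 1))
    (hindep : IndepFun (fun ω => fun i => z i ω) τ P)
    (α : Fin (n + 1) → Ω → ℝ)
    (hα : ∀ (i : Fin (n + 1)) (ω : Ω),
      α i ω = A (fun j : Fin n => z (i.succAbove j) ω) (z i ω))
    (U : Ω → ℝ)
    (hU : ∀ ω, U ω =
      (((univ.filter (fun i => α i ω < α (Fin.last n) ω)).card : ℝ) +
        τ ω * ((univ.filter (fun i => α i ω = α (Fin.last n) ω)).card : ℝ)) / (n + 1)) :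
    ∀ a : ℝ, a ∈ Set.Icc (0 : ℝ) 1 → P {ω | U ω ≤ a} = ENNReal.ofReal a := by
  rintro a ⟨ha0, ha1⟩
  set V : Ω → Fin (n + 1) → Z := fun ω i => z i ω
  have hV : Measurable V := measurable_pi_lambda _ hz
  have hscores := measurable_conformityScores hA
  have : IsProbabilityMeasure (P.map V) := Measure.isProbabilityMeasure_map hV.aemeasurable
  have : IsProbabilityMeasure ((P.map V).map (conformityScores A)) :=
    Measure.isProbabilityMeasure_map hscores.aemeasurable
  have hexchV (π : Equiv.Perm (Fin (n + 1))) : (P.map V).map (fun v => v ∘ π) = P.map V := by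
    rw [Measure.map_map (by fun_prop) hV]
    exact hexch π
  have hlaw : P.map (fun ω => (conformityScores A (V ω), τ ω)) =
      ((P.map V).map (conformityScores A)).prod (volume.restrict (Set.Icc (0 : ℝ) 1)) := by
    rw [Measure.map_map hscores hV, ← hτunif]
    exact (indepFun_iff_map_prod_eq_prod_map_map (hscores.comp hV).aemeasurable
      hτ.aemeasurable).1 (hindep.comp hscores measurable_id)
  have hUV : {ω | U ω ≤ a} = (fun ω => (conformityScores A (V ω), τ ω)) ⁻¹'
      {p | smoothedRank p.1 (Fin.last n) p.2 ≤ a * Fintype.card (Fin (n + 1))} := by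
    ext ω
    simp only [Set.mem_ofPred_eq, Set.mem_preimage, hU, Fintype.card_fin, Nat.cast_add_one,
      div_le_iff₀ (by positivity : (0 : ℝ) < n + 1), smoothedRank, conformityScores, hα, V]
    -- the sides differ only in the order instances on `ℝ` (generic `LinearOrder` vs. `Real`)
    exact Iff.rfl
  have hpair : Measurable fun ω => (conformityScores A (V ω), τ ω) := (hscores.comp hV).prodMk hτ
  rw [hUV, ← Measure.map_apply hpair (measurableSet_smoothedRank_le _ _), hlaw]
  exact prod_smoothedRank_le_mul_card (map_conformityScores_comp_perm hA hAinv hexchV)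
    (Fin.last n) ha0 ha1
end

section
/- Let $a_1, \ldots, a_{n+1}$ be exchangeable real-valued random variables that are almost surely distinct (no ties), and let $\tau \sim U[0,1]$ be independent of them. Then $\frac{1}{n+1}\left(|\{i \le n+1 : a_i < a_{n+1}\}| + \tau\right)$ is uniformly distributed on $[0,1]$. -/
/-!
On the event of no ties, `j ↦ #{i | a i < a j}` is a bijection from the indices onto
`{0, …, n}`, and exchangeability makes the rank of every index equidistributed; hence the
rank `R` of `a n` is uniform on `{0, …, n}`. Adding an independent uniform `τ` spreads each
atom `k` uniformly over `[k, k + 1]`, so `R + τ` is uniform on `[0, n + 1]`.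
-/

open MeasureTheory ProbabilityTheory Finset
open scoped ENNReal

section Rank

variable {ι α : Type*} [Fintype ι] [LinearOrder α]

def rank (x : ι → α) (j : ι) : ℕ := #{i | x i < x j}

lemma rank_lt_card (x : ι → α) (j : ι) : rank x j < Fintype.card ι := by
  refine (card_lt_card ⟨subset_univ _, fun h => ?_⟩).trans_eq card_univ
  exact lt_irrefl _ (mem_filter.1 (h (mem_univ j))).2

lemma rank_lt_rank {x : ι → α} {j j' : ι} (h : x j < x j') : rank x j < rank x j' := by
  refine card_lt_card ⟨fun i hi => ?_, fun hsub => ?_⟩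
  · simp only [mem_filter, mem_univ, true_and] at hi ⊢
    exact hi.trans h
  · exact lt_irrefl _ (mem_filter.1 (hsub (mem_filter.2 ⟨mem_univ j, h⟩))).2

lemma rank_injective {x : ι → α} (hx : Function.Injective x) : Function.Injective (rank x) := by
  intro j j' h
  by_contra hne
  rcases (hx.ne hne).lt_or_gt with hlt | hlt
  · exact (rank_lt_rank hlt).ne h
  · exact (rank_lt_rank hlt).ne' h

lemma exists_rank_eq {x : ι → α} (hx : Function.Injective x) {k : ℕ}
    (hk : k < Fintype.card ι) : ∃ j, rank x j = k := by
  let r : ι → Fin (Fintype.card ι) := fun j => ⟨rank x j, rank_lt_card x j⟩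
  have hr : Function.Injective r := fun j j' h => rank_injective hx (congrArg Fin.val h)
  obtain ⟨j, hj⟩ := ((Fintype.bijective_iff_injective_and_card r).2
    ⟨hr, (Fintype.card_fin _).symm⟩).2 ⟨k, hk⟩
  exact ⟨j, congrArg Fin.val hj⟩

lemma rank_comp_perm (x : ι → α) (π : Equiv.Perm ι) (j : ι) :
    rank (fun i => x (π i)) j = rank x (π j) :=
  card_equiv π (by simp)

end Rank

lemma ae_injective_of_measure_eq_zero {Ω ι α : Type*} [MeasurableSpace Ω] [Countable ι]
    {P : Measure Ω} {X : Ω → ι → α} (h : ∀ i j, i ≠ j → P {ω | X ω i = X ω j} = 0) :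
    ∀ᵐ ω ∂P, Function.Injective (X ω) := by
  have hne : ∀ i j, ∀ᵐ ω ∂P, i ≠ j → X ω i ≠ X ω j := fun i j => by
    by_cases hij : i = j
    · simp [hij]
    · filter_upwards [measure_eq_zero_iff_ae_notMem.1 (h i j hij)] with ω hω _ using hω
  filter_upwards [ae_all_iff.2 fun i => ae_all_iff.2 (hne i)] with ω hω i j hij
  exact not_imp_not.1 (hω i j) hij

section Exchangeable

variable {Ω ι : Type*} [MeasurableSpace Ω] {P : Measure Ω} [Fintype ι] {X : Ω → ι → ℝ}

lemma measurable_rank (j : ι) : Measurable fun x : ι → ℝ => rank x j := by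
  simp_rw [rank, card_filter]
  exact Finset.measurable_sum _ fun i _ =>
    Measurable.ite (measurableSet_lt (measurable_pi_apply i) (measurable_pi_apply j))
      measurable_const measurable_const

lemma measure_rank_eq_of_exchangeable (hX : Measurable X)
    (hexch : ∀ π : Equiv.Perm ι, P.map (fun ω i => X ω (π i)) = P.map X) (j j' : ι) (k : ℕ) :
    P {ω | rank (X ω) j = k} = P {ω | rank (X ω) j' = k} := by
  classical
  have hπ : Measurable fun ω i => X ω (Equiv.swap j j' i) :=
    measurable_pi_lambda _ fun i => (measurable_pi_apply _).comp hX
  have hS : MeasurableSet {x : ι → ℝ | rank x j' = k} :=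
    measurable_rank j' (measurableSet_singleton k)
  calc P {ω | rank (X ω) j = k}
      = P.map (fun ω i => X ω (Equiv.swap j j' i)) {x | rank x j' = k} := by
        rw [Measure.map_apply hπ hS]
        congr! 2 with ω
        simp [rank_comp_perm]
    _ = P {ω | rank (X ω) j' = k} := by rw [hexch, Measure.map_apply hX hS]; rfl

lemma sum_measure_rank_eq_one [IsProbabilityMeasure P] (hX : Measurable X)
    (hinj : ∀ᵐ ω ∂P, Function.Injective (X ω)) {k : ℕ} (hk : k < Fintype.card ι) :
    ∑ j, P {ω | rank (X ω) j = k} = 1 := by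
  have hmeas : ∀ j, MeasurableSet {ω | rank (X ω) j = k} := fun j =>
    (measurable_rank j).comp hX (measurableSet_singleton k)
  have hdisj : Pairwise (Function.onFun (AEDisjoint P) fun j => {ω | rank (X ω) j = k}) :=
    fun j j' hjj' => measure_eq_zero_iff_ae_notMem.2 <| hinj.mono fun ω hω h =>
      hjj' (rank_injective hω (h.1.trans h.2.symm))
  have hunion : P (⋃ j, {ω | rank (X ω) j = k}) = 1 :=
    (prob_compl_eq_zero_iff (MeasurableSet.iUnion hmeas)).1 <| measure_eq_zero_iff_ae_notMem.2 <|
      hinj.mono fun ω hω h => h (Set.mem_iUnion.2 (exists_rank_eq hω hk))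
  rw [← tsum_fintype (L := .unconditional _), ← measure_iUnion₀ hdisj fun j =>
    (hmeas j).nullMeasurableSet, hunion]

lemma measure_rank_eq_inv_card [IsProbabilityMeasure P] (hX : Measurable X)
    (hexch : ∀ π : Equiv.Perm ι, P.map (fun ω i => X ω (π i)) = P.map X)
    (hinj : ∀ᵐ ω ∂P, Function.Injective (X ω)) (j : ι) {k : ℕ} (hk : k < Fintype.card ι) :
    P {ω | rank (X ω) j = k} = (Fintype.card ι : ℝ≥0∞)⁻¹ := by
  have h := sum_measure_rank_eq_one hX hinj hk
  simp_rw [measure_rank_eq_of_exchangeable hX hexch _ j k, sum_const, card_univ,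
    nsmul_eq_mul] at h
  exact ENNReal.eq_inv_of_mul_eq_one_left (by rwa [mul_comm])

end Exchangeable

section Smoothing

lemma sum_range_ofReal_min_sub (m : ℕ) {t : ℝ} (ht : t ≤ m) :
    ∑ k ∈ range m, ENNReal.ofReal (min (t - k) 1) = ENNReal.ofReal t := by
  induction m generalizing t with
  | zero => simp [ENNReal.ofReal_eq_zero.2 (by simpa using ht)]
  | succ m ih =>
    have hshift : ∀ k : ℕ, t - ((k + 1 : ℕ) : ℝ) = t - 1 - k := fun k => by push_cast; ring
    rw [sum_range_succ', Nat.cast_zero, sub_zero]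
    simp_rw [hshift]
    rw [ih (by push_cast at ht; linarith)]
    rcases le_or_gt 1 t with h | h
    · rw [min_eq_right h, ← ENNReal.ofReal_add (by linarith) zero_le_one,
        sub_add_cancel]
    · rw [min_eq_left h.le, ENNReal.ofReal_eq_zero.2 (by linarith), zero_add]

variable {Ω : Type*} [MeasurableSpace Ω] {P : Measure Ω} {τ : Ω → ℝ}

lemma measure_preimage_Iic_of_map_eq_volume_Icc (hτ : Measurable τ)
    (hτunif : P.map τ = volume.restrict (Set.Icc 0 1)) (s : ℝ) :
    P (τ ⁻¹' Set.Iic s) = ENNReal.ofReal (min s 1) := by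
  have : Set.Iic s ∩ Set.Icc 0 1 = Set.Icc 0 (min s 1) := by
    ext x
    simp only [Set.mem_inter_iff, Set.mem_Iic, Set.mem_Icc, le_min_iff]
    tauto
  rw [← Measure.map_apply hτ measurableSet_Iic, hτunif, Measure.restrict_apply measurableSet_Iic,
    this, Real.volume_Icc, sub_zero]

lemma measure_add_div_le_of_indepFun [IsProbabilityMeasure P] {m : ℕ} {R : Ω → ℕ}
    (hR : Measurable R) (hτ : Measurable τ) (hRτ : IndepFun R τ P) (hRlt : ∀ ω, R ω < m)
    (hRunif : ∀ k < m, P (R ⁻¹' {k}) = (m : ℝ≥0∞)⁻¹)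
    (hτunif : P.map τ = volume.restrict (Set.Icc 0 1)) {c : ℝ} (hc : c ≤ 1) :
    P {ω | (R ω + τ ω) / m ≤ c} = ENNReal.ofReal c := by
  have hm : (0 : ℝ) < m :=
    Nat.cast_pos.2 (Nat.zero_lt_of_lt (hRlt (nonempty_of_isProbabilityMeasure P).some))
  have hset : {ω | (R ω + τ ω) / m ≤ c}
      = ⋃ k ∈ range m, R ⁻¹' {k} ∩ τ ⁻¹' Set.Iic (c * m - k) := by
    ext ω
    simp only [Set.mem_ofPred_eq, Set.mem_iUnion, Set.mem_inter_iff, Set.mem_preimage,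
      Set.mem_singleton_iff, Set.mem_Iic, mem_range, div_le_iff₀ hm, exists_prop]
    exact ⟨fun h => ⟨R ω, hRlt ω, rfl, by linarith⟩, fun ⟨k, _, hk, h⟩ => by rw [hk]; linarith⟩
  have hdisj : (range m : Set ℕ).PairwiseDisjoint
      fun k => R ⁻¹' {k} ∩ τ ⁻¹' Set.Iic (c * m - k) :=
    fun k _ k' _ hkk' => Set.disjoint_left.2 fun ω hω hω' => hkk' (hω.1.symm.trans hω'.1)
  rw [hset, measure_biUnion_finset hdisj fun k _ =>
    (hR (measurableSet_singleton k)).inter (hτ measurableSet_Iic)]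
  calc ∑ k ∈ range m, P (R ⁻¹' {k} ∩ τ ⁻¹' Set.Iic (c * m - k))
      = ∑ k ∈ range m, (m : ℝ≥0∞)⁻¹ * ENNReal.ofReal (min (c * m - k) 1) := by
        refine sum_congr rfl fun k hk => ?_
        rw [hRτ.measure_inter_preimage_eq_mul _ _ (measurableSet_singleton k) measurableSet_Iic,
          hRunif k (mem_range.1 hk), measure_preimage_Iic_of_map_eq_volume_Icc hτ hτunif]
    _ = (m : ℝ≥0∞)⁻¹ * (ENNReal.ofReal c * m) := by
        rw [← mul_sum, sum_range_ofReal_min_sub m (by nlinarith), ENNReal.ofReal_mul' hm.le,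
          ENNReal.ofReal_natCast]
    _ = ENNReal.ofReal c := by
        rw [mul_comm, mul_assoc, ENNReal.mul_inv_cancel (by exact_mod_cast hm.ne') (by simp),
          mul_one]

end Smoothing

/-- Tie-free validity of smoothed conformal p-values: for exchangeable,
almost surely distinct `a 0, …, a n` and an independent uniform `τ`,
`(|{i : a i < a n}| + τ)/(n+1)` is uniform on `[0,1]`. -/
theorem stmt_7 {Ω : Type*} [MeasurableSpace Ω] (P : Measure Ω) [IsProbabilityMeasure P]
    (n : ℕ) (a : Fin (n + 1) → Ω → ℝ) (ha : ∀ i, Measurable (a i))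
    (hexch : ∀ π : Equiv.Perm (Fin (n + 1)),
      Measure.map (fun ω => fun i => a (π i) ω) P = Measure.map (fun ω => fun i => a i ω) P)
    (hdistinct : ∀ i j : Fin (n + 1), i ≠ j → P {ω | a i ω = a j ω} = 0)
    (τ : Ω → ℝ) (hτ : Measurable τ)
    (hτunif : Measure.map τ P = volume.restrict (Set.Icc (0 : ℝ) 1))
    (hindep : IndepFun (fun ω => fun i => a i ω) τ P) :
    ∀ c : ℝ, c ∈ Set.Icc (0 : ℝ) 1 →
      P {ω | (((univ.filter (fun i => a i ω < a (Fin.last n) ω)).card : ℝ) + τ ω) / (n + 1)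
          ≤ c} = ENNReal.ofReal c := by
  intro c hc
  have hX : Measurable fun ω i => a i ω := measurable_pi_lambda _ ha
  have hrank : ∀ k < n + 1,
      P {ω | rank (fun i => a i ω) (Fin.last n) = k} = ((n + 1 : ℕ) : ℝ≥0∞)⁻¹ := fun k hk => by
      simpa using measure_rank_eq_inv_card hX hexch (ae_injective_of_measure_eq_zero hdistinct)
        (Fin.last n) (k := k) (by simpa using hk)
  have h := measure_add_div_le_of_indepFun (m := n + 1)
    (R := fun ω => rank (fun i => a i ω) (Fin.last n)) ((measurable_rank _).comp hX) hτ
    (hindep.comp (measurable_rank _) measurable_id)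
    (fun ω => by simpa using rank_lt_card (fun i => a i ω) (Fin.last n)) hrank hτunif hc.2
  rwa [Nat.cast_succ] at h
end

section
/- Consider a sample of two observations: with probability $1/2$ the data sequence is $((x^{-1},-1),(x^{1},1))$ and with probability $1/2$ it is $((x^{1},1),(x^{-1},-1))$, where $x^{-1} \ne x^{1}$ are two distinct predictors; this measure on pairs is exchangeable. Define the conformity measure $A((x_1,y_1),(x_2,y_2)) = y_2$ if $x_2 = x^{1}$ and $A((x_1,y_1),(x_2,y_2)) = 3y_2 + 2$ if $x_2 = x^{-1}$, and let $Q$ be the corresponding conformal transducer with $n = 1$ training observation. Then for the postulated response $y = 0$, the expected value of $Q(z_1, (x_2, 0), \tau)$ (over the data and independent $\tau \sim U[0,1]$) equals $3/4$, while $P(y_2 \le 0) = 1/2$. Hence this conformal predictive system is not marginally calibrated. -/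
open MeasureTheory
open scoped Classical

/-! Since `x¹ ≠ x⁻¹`, in both orderings of the data the training observation's conformity score
lies strictly below that of the test object `(x₂, 0)` (`-1 < 0` and `1 < 2`), with no tie. So in
both cases the transducer at `y = 0` is `(1 + τ) / 2`, whose mean over `τ ∈ [0, 1]` is `3/4`. -/

lemma transducer_of_lt {a b : ℝ} (h : a < b) (τ : ℝ) :
    ((if a < b then (1 : ℝ) else 0) + τ * ((if a = b then (1 : ℝ) else 0) + 1)) / 2 =
      (1 + τ) / 2 := by
  simp [h, h.ne]

lemma setIntegral_Icc_zero_one_one_add_div_two :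
    ∫ τ in Set.Icc (0 : ℝ) 1, (1 + τ) / 2 = 3 / 4 := by
  rw [integral_Icc_eq_integral_Ioc, ← intervalIntegral.integral_of_le zero_le_one,
    intervalIntegral.integral_div, intervalIntegral.integral_add intervalIntegrable_const
      intervalIntegral.intervalIntegrable_id, integral_id]
  norm_num

/-- Conformal predictive systems need not be marginally calibrated under
exchangeability: with data equally likely `((x⁻¹,-1),(x¹,1))` or
`((x¹,1),(x⁻¹,-1))` and the conformity measure `A((x₁,y₁),(x₂,y₂)) = y₂` if
`x₂ = x¹` and `3y₂+2` if `x₂ = x⁻¹`, the expectation of the conformal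
transducer at the postulated response `y = 0` is `3/4`, while
`P(y₂ ≤ 0) = 1/2 ≠ 3/4`. -/
theorem stmt_14 {X : Type*} (xm xp : X) (hne : xm ≠ xp)
    (A : X × ℝ → X × ℝ → ℝ)
    (hA : ∀ z w : X × ℝ, A z w = if w.1 = xp then w.2 else 3 * w.2 + 2)
    (Q : X × ℝ → X → ℝ → ℝ → ℝ)
    (hQ : ∀ (z₁ : X × ℝ) (x : X) (y τ : ℝ),
      Q z₁ x y τ = ((if A (x, y) z₁ < A z₁ (x, y) then (1 : ℝ) else 0) +
        τ * ((if A (x, y) z₁ = A z₁ (x, y) then (1 : ℝ) else 0) + 1)) / 2) :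
    (1 / 2) * (∫ τ in Set.Icc (0 : ℝ) 1, Q (xm, -1) xp 0 τ) +
      (1 / 2) * (∫ τ in Set.Icc (0 : ℝ) 1, Q (xp, 1) xm 0 τ) = 3 / 4 ∧
    (1 / 2 : ℝ) * (if (1 : ℝ) ≤ 0 then 1 else 0) +
      (1 / 2) * (if (-1 : ℝ) ≤ 0 then 1 else 0) = 1 / 2 ∧
    (3 / 4 : ℝ) ≠ 1 / 2 := by
  refine ⟨?_, by norm_num, by norm_num⟩
  have test_xp_score_lt : A (xp, 0) (xm, -1) < A (xm, -1) (xp, 0) := by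
    simp only [hA, hne, if_true, if_false]
    norm_num
  have test_xm_score_lt : A (xm, 0) (xp, 1) < A (xp, 1) (xm, 0) := by
    simp only [hA, hne, if_true, if_false]
    norm_num
  simp only [hQ, transducer_of_lt test_xp_score_lt, transducer_of_lt test_xm_score_lt,
    setIntegral_Icc_zero_one_one_add_div_two]
  norm_num
end

section
/- In the same setting as the previous counterexample but with the two observations drawn independently (i.e., each of the two observations is independently $(x^{-1},-1)$ or $(x^{1},1)$ with probability $1/2$ each), the expected value of the conformal transducer $Q(z_1,(x_2,0),\tau)$ at postulated response $y = 0$ equals $5/8$, whereas $P(y_2 \le 0) = 1/2$. Hence conformal predictive systems need not be marginally calibrated even under the IID model. -/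
open MeasureTheory
open scoped Classical

theorem setIntegral_Icc_zero_one_affine_div_two (a c : ℝ) :
    ∫ τ in Set.Icc (0 : ℝ) 1, (a + τ * c) / 2 = (a + c / 2) / 2 := by
  rw [integral_Icc_eq_integral_Ioc, ← intervalIntegral.integral_of_le zero_le_one,
    intervalIntegral.integral_div, intervalIntegral.integral_add intervalIntegrable_const
      ((continuous_mul_const c).intervalIntegrable 0 1), intervalIntegral.integral_mul_const,
    integral_id, intervalIntegral.integral_const]
  norm_num
  ring

/-- Conformal predictive systems need not be marginally calibrated even under
the IID model: with the two observations independently equal to `(x⁻¹,-1)` or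
`(x¹,1)` with probability `1/2` each (four equally likely data sequences) and
the conformity measure of the previous example, the expectation of the
conformal transducer at the postulated response `y = 0` is `5/8`, while
`P(y₂ ≤ 0) = 1/2 ≠ 5/8`. -/
theorem stmt_15 {X : Type*} (xm xp : X) (hne : xm ≠ xp)
    (A : X × ℝ → X × ℝ → ℝ)
    (hA : ∀ z w : X × ℝ, A z w = if w.1 = xp then w.2 else 3 * w.2 + 2)
    (Q : X × ℝ → X → ℝ → ℝ → ℝ)
    (hQ : ∀ (z₁ : X × ℝ) (x : X) (y τ : ℝ),
      Q z₁ x y τ = ((if A (x, y) z₁ < A z₁ (x, y) then (1 : ℝ) else 0) +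
        τ * ((if A (x, y) z₁ = A z₁ (x, y) then (1 : ℝ) else 0) + 1)) / 2) :
    (1 / 4) * (∫ τ in Set.Icc (0 : ℝ) 1, Q (xm, -1) xp 0 τ) +
      (1 / 4) * (∫ τ in Set.Icc (0 : ℝ) 1, Q (xp, 1) xm 0 τ) +
      (1 / 4) * (∫ τ in Set.Icc (0 : ℝ) 1, Q (xm, -1) xm 0 τ) +
      (1 / 4) * (∫ τ in Set.Icc (0 : ℝ) 1, Q (xp, 1) xp 0 τ) = 5 / 8 ∧
    (1 / 2 : ℝ) * (if (1 : ℝ) ≤ 0 then 1 else 0) +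
      (1 / 2) * (if (-1 : ℝ) ≤ 0 then 1 else 0) = 1 / 2 ∧
    (5 / 8 : ℝ) ≠ 1 / 2 := by
  refine ⟨?_, by norm_num, by norm_num⟩
  -- Averaged over τ, the transducer is 3/4 in the first three cases, where the training score
  -- is below the test score, and 1/4 in the last, where it is above.
  simp only [hQ, setIntegral_Icc_zero_one_affine_div_two, hA, hne, if_true, if_false]
  norm_num
end

section
/- Fix $n \ge 1$ and an equivalence relation $\sim$ on $\{1,\ldots,n+1\}$; let $C = \{i : i \sim n+1\}$ be the equivalence class of $n+1$ with $|C| = k$. Let $a_1, \ldots, a_{n+1}$ be real random variables such that, conditionally on the multiset of values $\{a_i : i \in C\}$ (assumed almost surely to consist of $k$ distinct values), the assignment of these values to the indices in $C$ is uniformly distributed over all $k!$ bijections. Let $\tau \sim U[0,1]$ independently. Then $\frac{1}{k}\left(|\{i \in C : a_i < a_{n+1}\}| + \tau\right)$ is uniformly distributed on $[0,1]$. -/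
/-!
For an almost surely injective score vector, the ranks within `C` form a bijection
`C → {0, …, k - 1}`, so for each `r < k` the events `{rank of a j = r}`, `j ∈ C`, partition
the sample space up to a null set. The transposition of `j` and the test index fixes everything
outside `C`, so by exchangeability all these events have the same probability, which is
therefore `1 / k`. Given rank `r`, the smoothed p-value is at most `c` exactly when
`τ ≤ c k - r`, and the probabilities `min (c k - r, 1)⁺ / k` of these events telescope to `c`.
-/

open MeasureTheory ProbabilityTheory Finset
open scoped ENNReal

section withinRank

variable {ι α : Type*} [LinearOrder α]

def withinRank (C : Finset ι) (v : ι → α) (j : ι) : ℕ := #{i ∈ C | v i < v j}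

variable {C : Finset ι} {v : ι → α}

lemma withinRank_lt_card {j : ι} (hj : j ∈ C) : withinRank C v j < #C :=
  card_lt_card (filter_ssubset.2 ⟨j, hj, lt_irrefl _⟩)

lemma withinRank_lt_withinRank {i j : ι} (hi : i ∈ C) (h : v i < v j) :
    withinRank C v i < withinRank C v j := by
  refine card_lt_card ((ssubset_iff_of_subset ?_).2 ⟨i, ?_, ?_⟩)
  · intro x hx
    simp only [mem_filter] at hx ⊢
    exact ⟨hx.1, hx.2.trans h⟩
  · exact mem_filter.2 ⟨hi, h⟩
  · exact fun hmem => lt_irrefl _ (mem_filter.1 hmem).2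

lemma injOn_withinRank (hv : Set.InjOn v C) : Set.InjOn (withinRank C v) C := by
  intro i hi j hj hij
  by_contra hne
  rcases lt_or_gt_of_ne (hv.ne hi hj hne) with h | h
  · exact (withinRank_lt_withinRank hi h).ne hij
  · exact (withinRank_lt_withinRank hj h).ne' hij

lemma image_withinRank (hv : Set.InjOn v C) : C.image (withinRank C v) = range #C := by
  refine eq_of_subset_of_card_le (fun r hr => ?_) ?_
  · obtain ⟨j, hj, rfl⟩ := mem_image.1 hr
    exact mem_range.2 (withinRank_lt_card hj)
  · rw [card_range, card_image_of_injOn (injOn_withinRank hv)]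

lemma card_filter_withinRank_eq (hv : Set.InjOn v C) {r : ℕ} (hr : r < #C) :
    #{j ∈ C | withinRank C v j = r} = 1 := by
  obtain ⟨j, hj, rfl⟩ := mem_image.1 ((image_withinRank hv).symm ▸ mem_range.2 hr)
  refine card_eq_one.2 ⟨j, ext fun i => ?_⟩
  simp only [mem_filter, mem_singleton]
  exact ⟨fun ⟨hi, h⟩ => injOn_withinRank hv hi hj h, by rintro rfl; exact ⟨hj, rfl⟩⟩

lemma withinRank_comp_perm [DecidableEq ι] {π : Equiv.Perm ι} (hπ : ∀ i ∉ C, π i = i)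
    (j : ι) :
    withinRank C (v ∘ π) j = withinRank C v (π j) := by
  have hC : C.map (π : ι ↪ ι) = C := map_perm fun i hi => by_contra fun h => hi (hπ i h)
  conv_rhs => rw [withinRank, ← hC, filter_map, card_map]
  rfl

end withinRank

section Probability

variable {Ω ι α : Type*} [MeasurableSpace Ω] {P : Measure Ω} {C : Finset ι}
  {X : Ω → ι → α}

lemma ae_injOn_of_measure_eq_zero
    (h : ∀ i ∈ C, ∀ j ∈ C, i ≠ j → P {ω | X ω i = X ω j} = 0) :
    ∀ᵐ ω ∂P, Set.InjOn (X ω) C := by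
  have : ∀ i ∈ C, ∀ j ∈ C, ∀ᵐ ω ∂P, X ω i = X ω j → i = j := by
    intro i hi j hj
    by_cases hij : i = j
    · exact Filter.Eventually.of_forall fun _ _ => hij
    · exact ae_iff.2 (measure_mono_null (fun ω hω => (Classical.not_imp.1 hω).1) (h i hi j hj hij))
  simp only [← Filter.eventually_all_finset] at this
  filter_upwards [this] with ω hω i hi j hj
  exact hω i hi j hj

variable [LinearOrder α] [MeasurableSpace α] [TopologicalSpace α] [OrderClosedTopology α]
  [SecondCountableTopology α] [OpensMeasurableSpace α]

lemma measurable_withinRank (C : Finset ι) (j : ι) :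
    Measurable fun v : ι → α => withinRank C v j := by
  simp only [withinRank, card_filter]
  exact Finset.measurable_sum _ fun i _ =>
    Measurable.ite (measurableSet_lt (measurable_pi_apply i) (measurable_pi_apply j))
      measurable_const measurable_const

lemma sum_measure_withinRank_eq_one [IsProbabilityMeasure P] (hX : Measurable X)
    (hinj : ∀ᵐ ω ∂P, Set.InjOn (X ω) C) {r : ℕ} (hr : r < #C) :
    ∑ j ∈ C, P {ω | withinRank C (X ω) j = r} = 1 := by
  have hS : ∀ j, MeasurableSet {ω | withinRank C (X ω) j = r} := fun j =>
    (measurable_withinRank C j).comp hX (measurableSet_singleton r)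
  have hcount : (fun ω => ∑ j ∈ C, {ω | withinRank C (X ω) j = r}.indicator 1 ω)
      =ᵐ[P] (1 : Ω → ℝ≥0∞) := by
    filter_upwards [hinj] with ω hω
    simp only [Set.indicator_apply, Set.mem_ofPred_eq, Pi.one_apply, sum_boole,
      card_filter_withinRank_eq hω hr, Nat.cast_one]
  calc ∑ j ∈ C, P {ω | withinRank C (X ω) j = r}
      = ∫⁻ ω, ∑ j ∈ C, {ω | withinRank C (X ω) j = r}.indicator 1 ω ∂P := by
        rw [lintegral_finsetSum _ fun j _ => measurable_one.indicator (hS j)]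
        simp only [lintegral_indicator_one (hS _)]
    _ = 1 := by rw [lintegral_congr_ae hcount, Pi.one_def, lintegral_one, measure_univ]

lemma measure_withinRank_perm [DecidableEq ι] (hX : Measurable X) {π : Equiv.Perm ι}
    (hπ : ∀ i ∉ C, π i = i) (hmap : P.map (fun ω i => X ω (π i)) = P.map X) (j : ι) (r : ℕ) :
    P {ω | withinRank C (X ω) (π j) = r} = P {ω | withinRank C (X ω) j = r} := by
  have hmeas := measurable_withinRank (α := α) C j (measurableSet_singleton r)
  have hπX : Measurable fun ω i => X ω (π i) :=
    measurable_pi_lambda _ fun i => (measurable_pi_apply (π i)).comp hX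
  have hset : {ω | withinRank C (X ω) (π j) = r}
      = (fun ω i => X ω (π i)) ⁻¹' ((fun v => withinRank C v j) ⁻¹' {r}) := by
    ext ω
    simp only [Set.mem_ofPred_eq, Set.mem_preimage, Set.mem_singleton_iff]
    rw [← withinRank_comp_perm hπ]
    rfl
  rw [hset, ← Measure.map_apply hπX hmeas, hmap, Measure.map_apply hX hmeas]
  rfl

theorem measure_withinRank_eq_inv_card [DecidableEq ι] [IsProbabilityMeasure P]
    (hX : Measurable X)
    (hexch : ∀ π : Equiv.Perm ι, (∀ i, i ∉ C → π i = i) →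
      P.map (fun ω i => X ω (π i)) = P.map X)
    (hinj : ∀ᵐ ω ∂P, Set.InjOn (X ω) C) {j₀ : ι} (hj₀ : j₀ ∈ C) {r : ℕ} (hr : r < #C) :
    P {ω | withinRank C (X ω) j₀ = r} = (#C : ℝ≥0∞)⁻¹ := by
  have hconst : ∀ j ∈ C,
      P {ω | withinRank C (X ω) j = r} = P {ω | withinRank C (X ω) j₀ = r} := by
    intro j hj
    have hfix : ∀ i ∉ C, Equiv.swap j₀ j i = i := fun i hi =>
      Equiv.swap_apply_of_ne_of_ne (by rintro rfl; exact hi hj₀) (by rintro rfl; exact hi hj)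
    simpa using measure_withinRank_perm hX hfix (hexch _ hfix) j₀ r
  have hsum := sum_measure_withinRank_eq_one hX hinj hr
  rw [sum_congr rfl hconst, sum_const, nsmul_eq_mul] at hsum
  exact ENNReal.eq_inv_of_mul_eq_one_left (by rwa [mul_comm])

end Probability

lemma sum_range_ofReal_min_sub_one {k : ℕ} {x : ℝ} (hx₀ : 0 ≤ x) (hxk : x ≤ k) :
    ∑ r ∈ range k, ENNReal.ofReal (min (x - r) 1) = ENNReal.ofReal x := by
  induction k generalizing x with
  | zero => simp [le_antisymm (by exact_mod_cast hxk) hx₀]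
  | succ k ih =>
    rw [sum_range_succ', Nat.cast_zero, sub_zero]
    rcases le_total x 1 with h | h
    · have hzero : ∀ r : ℕ, ENNReal.ofReal (min (x - (r + 1 : ℕ)) 1) = 0 := fun r =>
        ENNReal.ofReal_eq_zero.2
          (min_le_of_left_le (by push_cast; linarith [r.cast_nonneg (α := ℝ)]))
      simp only [hzero, sum_const_zero, zero_add, min_eq_left h]
    · have hshift : ∀ r : ℕ, x - (r + 1 : ℕ) = x - 1 - r := fun r => by push_cast; ring
      simp only [hshift]
      rw [ih (by linarith) (by push_cast at hxk; linarith), min_eq_right h,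
        ← ENNReal.ofReal_add (by linarith) zero_le_one, sub_add_cancel]

theorem measure_add_div_le_eq_ofReal {Ω : Type*} [MeasurableSpace Ω] {P : Measure Ω}
    {R : Ω → ℕ} {τ : Ω → ℝ} (hR : Measurable R) (hτ : Measurable τ) {k : ℕ} (hk : 0 < k)
    (hRlt : ∀ ω, R ω < k) (hRunif : ∀ r < k, P (R ⁻¹' {r}) = (k : ℝ≥0∞)⁻¹)
    (hτunif : P.map τ = volume.restrict (Set.Icc 0 1)) (hind : IndepFun R τ P)
    {c : ℝ} (hc : c ∈ Set.Icc 0 1) :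
    P {ω | ((R ω : ℝ) + τ ω) / k ≤ c} = ENNReal.ofReal c := by
  set E := {ω | ((R ω : ℝ) + τ ω) / k ≤ c}
  have hkR : (0 : ℝ) < k := Nat.cast_pos.2 hk
  have hslice : ∀ r : ℕ, R ⁻¹' {r} ∩ E = R ⁻¹' {r} ∩ τ ⁻¹' Set.Iic (c * k - r) := by
    intro r
    ext ω
    simp only [E, Set.mem_inter_iff, Set.mem_preimage, Set.mem_singleton_iff,
      Set.mem_ofPred_eq, Set.mem_Iic, div_le_iff₀ hkR]
    constructor <;> rintro ⟨rfl, h⟩ <;> exact ⟨rfl, by linarith⟩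
  have hcdf : ∀ x : ℝ, P (τ ⁻¹' Set.Iic x) = ENNReal.ofReal (min x 1) := by
    intro x
    have hinter : Set.Iic x ∩ Set.Icc 0 1 = Set.Icc 0 (min x 1) := by
      ext t
      simp only [Set.mem_inter_iff, Set.mem_Iic, Set.mem_Icc, le_min_iff]
      tauto
    rw [← Measure.map_apply hτ measurableSet_Iic, hτunif,
      Measure.restrict_apply measurableSet_Iic, hinter, Real.volume_Icc, sub_zero]
  have hkc : 0 ≤ c * k := mul_nonneg hc.1 hkR.le
  have hfiber : ∀ r : ℕ, MeasurableSet (R ⁻¹' {r}) := fun r => hR (measurableSet_singleton r)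
  have hrange : R ⁻¹' ↑(range k) = Set.univ :=
    Set.eq_univ_of_forall fun ω => mem_range.2 (hRlt ω)
  calc P E = P.restrict E (R ⁻¹' ↑(range k)) := by rw [hrange, Measure.restrict_apply_univ]
    _ = ∑ r ∈ range k, P (R ⁻¹' {r} ∩ E) := by
        rw [← sum_measure_preimage_singleton _ fun r _ => hfiber r]
        exact sum_congr rfl fun r _ => Measure.restrict_apply (hfiber r)
    _ = ∑ r ∈ range k, (k : ℝ≥0∞)⁻¹ * ENNReal.ofReal (min (c * k - r) 1) := by
        refine sum_congr rfl fun r hr => ?_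
        rw [hslice, hind.measure_inter_preimage_eq_mul _ _ (measurableSet_singleton r)
          measurableSet_Iic, hRunif r (mem_range.1 hr), hcdf]
    _ = (k : ℝ≥0∞)⁻¹ * ENNReal.ofReal (c * k) := by
        rw [← mul_sum, sum_range_ofReal_min_sub_one hkc (by nlinarith [hc.2])]
    _ = ENNReal.ofReal c := by
        rw [ENNReal.ofReal_mul hc.1, ENNReal.ofReal_natCast, mul_comm, mul_assoc,
          ENNReal.mul_inv_cancel (Nat.cast_ne_zero.2 hk.ne') (ENNReal.natCast_ne_top k),
          mul_one]

/-- Validity of Mondrian transducers: if the conformity scores are exchangeable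
within the equivalence class `C` of the test index `n+1` (of size `k`) and
almost surely distinct there, then the smoothed within-class p-value
`(|{i ∈ C : a i < a (last)}| + τ)/k` is uniform on `[0,1]`. -/
theorem stmt_17 {Ω : Type*} [MeasurableSpace Ω] (P : Measure Ω) [IsProbabilityMeasure P]
    (n : ℕ) (s : Fin (n + 1) → Fin (n + 1) → Prop) [DecidablePred fun i => s i (Fin.last n)]
    (hs : Equivalence s)
    (C : Finset (Fin (n + 1))) (hC : C = univ.filter (fun i => s i (Fin.last n)))
    (k : ℕ) (hk : k = C.card)
    (a : Fin (n + 1) → Ω → ℝ) (ha : ∀ i, Measurable (a i))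
    (hexch : ∀ π : Equiv.Perm (Fin (n + 1)), (∀ i, i ∉ C → π i = i) →
      Measure.map (fun ω => fun i => a (π i) ω) P = Measure.map (fun ω => fun i => a i ω) P)
    (hdistinct : ∀ i ∈ C, ∀ j ∈ C, i ≠ j → P {ω | a i ω = a j ω} = 0)
    (τ : Ω → ℝ) (hτ : Measurable τ)
    (hτunif : Measure.map τ P = volume.restrict (Set.Icc (0 : ℝ) 1))
    (hindep : IndepFun (fun ω => fun i => a i ω) τ P) :
    ∀ c : ℝ, c ∈ Set.Icc (0 : ℝ) 1 →
      P {ω | (((C.filter (fun i => a i ω < a (Fin.last n) ω)).card : ℝ) + τ ω) / k ≤ c}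
        = ENNReal.ofReal c := by
  intro c hc
  subst hk
  have hlast : Fin.last n ∈ C := by simp [hC, hs.refl]
  set X : Ω → Fin (n + 1) → ℝ := fun ω i => a i ω
  have hX : Measurable X := measurable_pi_lambda _ ha
  have hrank := (measurable_withinRank (α := ℝ) C (Fin.last n)).comp hX
  exact measure_add_div_le_eq_ofReal hrank hτ (card_pos.2 ⟨_, hlast⟩)
    (fun _ => withinRank_lt_card hlast)
    (fun r hr => measure_withinRank_eq_inv_card hX hexch (ae_injOn_of_measure_eq_zero hdistinct)
      hlast hr)
    hτunif (hindep.comp (measurable_withinRank C (Fin.last n)) measurable_id) hc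
end
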